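/- arXiv:2206.15439 — 2 statements merged into one kernel-verified Lean document; each statement's English description precedes it below -/
import Mathlib

section
/- For the complete graph K_n with n ≥ 3, the outer-connected domination number of the middle graph satisfies γ̃_c(M(K_n)) = ⌈n/2⌉. -/
open SimpleGraph

/-- `S` is a dominating set of `H`: every vertex is in `S` or adjacent to a vertex of `S`. -/
def IsDomSet {V : Type*} (H : SimpleGraph V) (S : Set V) : Prop :=
  ∀ v : V, ∃ u ∈ S, u = v ∨ H.Adj u v

/-- The connected domination number: minimum size of a dominating set inducing a
connected subgraph. -/
noncomputable def connDomNum {V : Type*} (H : SimpleGraph V) : ℕ :=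
  sInf {k | ∃ S : Set V, IsDomSet H S ∧ (H.induce S).Connected ∧ S.ncard = k}

/-- The outer-connected domination number: minimum size of a dominating set whose
complement induces a connected subgraph. -/
noncomputable def outConnDomNum {V : Type*} (H : SimpleGraph V) : ℕ :=
  sInf {k | ∃ S : Set V, IsDomSet H S ∧ (H.induce Sᶜ).Connected ∧ S.ncard = k}

/-- The middle graph `M(G)`: vertices are `V(G) ∪ E(G)`; a vertex is adjacent to its
incident edges, and two edges are adjacent iff they share a vertex. -/
def middleGraph {V : Type*} (G : SimpleGraph V) : SimpleGraph (V ⊕ G.edgeSet) where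
  Adj x y :=
    match x, y with
    | Sum.inl _, Sum.inl _ => False
    | Sum.inl v, Sum.inr e => v ∈ (e : Sym2 V)
    | Sum.inr e, Sum.inl v => v ∈ (e : Sym2 V)
    | Sum.inr e, Sum.inr f => e ≠ f ∧ ∃ v, v ∈ (e : Sym2 V) ∧ v ∈ (f : Sym2 V)
  symm := by
    constructor
    rintro (v | e) (w | f) h
    · exact h.elim
    · exact h
    · exact h
    · exact ⟨Ne.symm h.1, h.2.imp fun v hv => ⟨hv.2, hv.1⟩⟩
  loopless := by
    constructor
    rintro (v | e) h
    · exact h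
    · exact h.1 rfl

/-- The edge cover number `ρ(G)`: minimum number of edges covering all vertices. -/
noncomputable def edgeCoverNum {V : Type*} (G : SimpleGraph V) : ℕ :=
  sInf {k | ∃ C : Set (Sym2 V), C ⊆ G.edgeSet ∧ (∀ v : V, ∃ e ∈ C, v ∈ e) ∧ C.ncard = k}

/-- The wheel graph with hub `none` and a cycle on `ZMod n` (so `n + 1` vertices). -/
def wheelGraph (n : ℕ) : SimpleGraph (Option (ZMod n)) where
  Adj x y :=
    match x, y with
    | none, none => False
    | none, some _ => True
    | some _, none => True
    | some i, some j => i ≠ j ∧ (i - j = 1 ∨ j - i = 1)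
  symm := by
    constructor
    rintro (_ | i) (_ | j) h
    · exact h.elim
    · trivial
    · trivial
    · exact ⟨h.1.symm, h.2.symm⟩
  loopless := by
    constructor
    rintro (_ | i) h
    · exact h
    · exact h.1 rfl

/-- The friendship graph `F n`: `n` triangles sharing the common vertex `none`. -/
def friendshipGraph (n : ℕ) : SimpleGraph (Option (Fin n × Fin 2)) where
  Adj x y :=
    match x, y with
    | none, none => False
    | none, some _ => True
    | some _, none => True
    | some (i, a), some (j, b) => i = j ∧ a ≠ b
  symm := by
    constructor
    rintro (_ | ⟨i, a⟩) (_ | ⟨j, b⟩) h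
    · exact h.elim
    · trivial
    · trivial
    · exact ⟨h.1.symm, h.2.symm⟩
  loopless := by
    constructor
    rintro (_ | ⟨i, a⟩) h
    · exact h
    · exact h.2 rfl

/-- The corona `G ∘ K₁`: each vertex `Sum.inl v` of `G` gets a pendant vertex `Sum.inr v`. -/
def corona {V : Type*} (G : SimpleGraph V) : SimpleGraph (V ⊕ V) where
  Adj x y :=
    match x, y with
    | Sum.inl v, Sum.inl w => G.Adj v w
    | Sum.inl v, Sum.inr w => v = w
    | Sum.inr v, Sum.inl w => v = w
    | Sum.inr _, Sum.inr _ => False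
  symm := by
    constructor
    rintro (v | v) (w | w) h
    · exact G.adj_symm h
    · exact h.symm
    · exact h.symm
    · exact h.elim
  loopless := by
    constructor
    rintro (v | v) h
    · exact G.loopless.irrefl v h
    · exact h

/-- The 2-corona `G ∘ P₂`: each vertex `Sum.inl v` of `G` gets a pendant path
`Sum.inl v — Sum.inr (Sum.inl v) — Sum.inr (Sum.inr v)`. -/
def corona2 {V : Type*} (G : SimpleGraph V) : SimpleGraph (V ⊕ (V ⊕ V)) where
  Adj x y :=
    match x, y with
    | Sum.inl v, Sum.inl w => G.Adj v w
    | Sum.inl v, Sum.inr (Sum.inl w) => v = w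
    | Sum.inr (Sum.inl v), Sum.inl w => v = w
    | Sum.inr (Sum.inl v), Sum.inr (Sum.inr w) => v = w
    | Sum.inr (Sum.inr v), Sum.inr (Sum.inl w) => v = w
    | _, _ => False
  symm := by
    constructor
    rintro (v | v | v) (w | w | w) h
    · exact G.adj_symm h
    · exact h.symm
    · exact h.elim
    · exact h.symm
    · exact h.elim
    · exact h.symm
    · exact h.elim
    · exact h.symm
    · exact h.elim
  loopless := by
    constructor
    rintro (v | v | v) h
    · exact G.loopless.irrefl v h
    · exact h
    · exact h

/-- The join `G + K̄ p` of `G` with the empty graph on `p` vertices. -/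
def joinEmpty {V : Type*} (G : SimpleGraph V) (p : ℕ) : SimpleGraph (V ⊕ Fin p) where
  Adj x y :=
    match x, y with
    | Sum.inl v, Sum.inl w => G.Adj v w
    | Sum.inl _, Sum.inr _ => True
    | Sum.inr _, Sum.inl _ => True
    | Sum.inr _, Sum.inr _ => False
  symm := by
    constructor
    rintro (v | v) (w | w) h
    · exact G.adj_symm h
    · trivial
    · trivial
    · exact h.elim
  loopless := by
    constructor
    rintro (v | v) h
    · exact G.loopless.irrefl v h
    · exact h

/-!
Every element of `M(G)` dominates at most two vertices of `G`, so a dominating set of `M(K_n)`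
has at least `⌈n/2⌉` elements. Conversely, the edges `{2i, 2i+1}`, together with the vertex
`n - 1` when `n` is odd, dominate `M(K_n)`. Their complement is connected: it contains every
edge `{0, j}` with `j ≥ 2`, these pairwise meet at `0`, and every other remaining element meets
one of them, the vertex `1` through the edge `{1, 2}`.
-/

section MiddleGraph

variable {V : Type*} (G : SimpleGraph V)

@[simp] lemma middleGraph_adj_inl_inl (v w : V) :
    ¬(middleGraph G).Adj (Sum.inl v) (Sum.inl w) :=
  id

@[simp] lemma middleGraph_adj_inr_inl (e : G.edgeSet) (v : V) :
    (middleGraph G).Adj (Sum.inr e) (Sum.inl v) ↔ v ∈ (e : Sym2 V) :=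
  Iff.rfl

lemma middleGraph_adj_inr_inr {e f : G.edgeSet} (hef : e ≠ f) {v : V}
    (he : v ∈ (e : Sym2 V)) (hf : v ∈ (f : Sym2 V)) :
    (middleGraph G).Adj (Sum.inr e) (Sum.inr f) :=
  ⟨hef, v, he, hf⟩

lemma exists_pair_of_dominates_inl (x : V ⊕ G.edgeSet) :
    ∃ a b : V, ∀ v, (x = Sum.inl v ∨ (middleGraph G).Adj x (Sum.inl v)) → v = a ∨ v = b := by
  rcases x with w | ⟨e, he⟩
  · refine ⟨w, w, fun v hv => ?_⟩
    simp only [Sum.inl.injEq, middleGraph_adj_inl_inl, or_false] at hv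
    exact Or.inl hv.symm
  · induction e using Sym2.ind with
    | _ a b =>
      refine ⟨a, b, fun v hv => ?_⟩
      simpa using hv

lemma isDomSet_middleGraph_of_forall_inl {S : Set (V ⊕ G.edgeSet)}
    (hS : ∀ v : V, ∃ x ∈ S, x = Sum.inl v ∨ (middleGraph G).Adj x (Sum.inl v)) :
    IsDomSet (middleGraph G) S := by
  rintro (v | e)
  · exact hS v
  obtain ⟨x, hxS, hx⟩ := hS (e : Sym2 V).out.1
  refine ⟨x, hxS, ?_⟩
  have ha := Sym2.out_fst_mem (e : Sym2 V)
  rcases hx with rfl | hx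
  · exact Or.inr ha
  rcases x with w | f
  · exact (middleGraph_adj_inl_inl G _ _ hx).elim
  by_cases hfe : f = e
  · exact Or.inl (congrArg Sum.inr hfe)
  · exact Or.inr (middleGraph_adj_inr_inr G hfe hx ha)

open Finset in
lemma card_le_two_mul_ncard_of_isDomSet [Fintype V] {T : Set (V ⊕ G.edgeSet)}
    (hT : IsDomSet (middleGraph G) T) : Fintype.card V ≤ 2 * T.ncard := by
  classical
  choose f hfT hf using fun v : V => hT (Sum.inl v)
  have hTfin := T.toFinite
  rw [Set.ncard_eq_toFinset_card T hTfin]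
  refine Finset.card_le_mul_card_image_of_maps_to (fun v _ => hTfin.mem_toFinset.2 (hfT v)) 2
    fun x _ => ?_
  obtain ⟨a, b, hab⟩ := exists_pair_of_dominates_inl G x
  calc #{v | f v = x} ≤ #{a, b} := Finset.card_le_card fun v hv => by
          simpa using hab v ((Finset.mem_filter.1 hv).2 ▸ hf v)
    _ ≤ 2 := Finset.card_le_two

end MiddleGraph

section CompleteGraph

variable {V : Type*}

lemma connected_induce_compl_middleGraph_top {S : Set (V ⊕ (⊤ : SimpleGraph V).edgeSet)}
    {p q r : V} (hpq : p ≠ q) (hpr : p ≠ r) (hqr : q ≠ r)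
    (hSp : ∀ e, Sum.inr e ∈ S → p ∈ (e : Sym2 V) → q ∈ (e : Sym2 V))
    (hSqr : ∀ e, Sum.inr e ∈ S → q ∈ (e : Sym2 V) → r ∉ (e : Sym2 V)) :
    ((middleGraph ⊤).induce Sᶜ).Connected := by
  set M := middleGraph (⊤ : SimpleGraph V)
  let edge : ∀ {a b : V}, a ≠ b → (⊤ : SimpleGraph V).edgeSet := fun {a b} h => ⟨s(a, b), h⟩
  have edge_ne {a b c d : V} (hab : a ≠ b) (hcd : c ≠ d) (ha : a ∉ (s(c, d) : Sym2 V)) :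
      edge hab ≠ edge hcd := fun h => by
    have h' : s(a, b) = s(c, d) := congrArg Subtype.val h
    exact ha (h' ▸ Sym2.mem_mk_left a b)
  have hub_mem : Sum.inr (edge hpr) ∈ Sᶜ := fun hS => by
    simpa [edge, hpq.symm, hqr] using hSp _ hS (Sym2.mem_mk_left p r)
  set hub : ↥Sᶜ := ⟨_, hub_mem⟩
  have reach_of_adj {x y : V ⊕ (⊤ : SimpleGraph V).edgeSet} (hx : x ∈ Sᶜ) (hy : y ∈ Sᶜ)
      (hxy : M.Adj x y) (hreach : (M.induce Sᶜ).Reachable ⟨y, hy⟩ hub) :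
      (M.induce Sᶜ).Reachable ⟨x, hx⟩ hub :=
    (show (M.induce Sᶜ).Adj ⟨x, hx⟩ ⟨y, hy⟩ from hxy).reachable.trans hreach
  have reach_of_p_mem (e) (he : Sum.inr e ∈ Sᶜ) (hpe : p ∈ (e : Sym2 V)) :
      (M.induce Sᶜ).Reachable ⟨_, he⟩ hub := by
    by_cases h : e = edge hpr
    · subst h; rfl
    · exact Adj.reachable (middleGraph_adj_inr_inr _ h hpe (Sym2.mem_mk_left p r))
  have spoke_mem {c : V} (hpc : p ≠ c) (hcq : c ≠ q) : Sum.inr (edge hpc) ∈ Sᶜ := fun hS => by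
    simpa [edge, hpq.symm, hcq.symm] using hSp _ hS (Sym2.mem_mk_left p c)
  refine (connected_iff_exists_forall_reachable _).2 ⟨hub, fun ⟨x, hx⟩ => Reachable.symm ?_⟩
  rcases x with v | e
  · by_cases hvq : v = q
    · subst hvq
      have hqr_mem : Sum.inr (edge hqr) ∈ Sᶜ := fun hS =>
        hSqr _ hS (Sym2.mem_mk_left v r) (Sym2.mem_mk_right v r)
      refine reach_of_adj hx hqr_mem (Sym2.mem_mk_left v r) (Adj.reachable ?_)
      exact middleGraph_adj_inr_inr _ (edge_ne hqr hpr (by simp [hpq.symm, hqr]))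
        (Sym2.mem_mk_right v r) (Sym2.mem_mk_right p r)
    by_cases hvp : v = p
    · subst hvp
      exact Adj.reachable (Sym2.mem_mk_left v r)
    · exact reach_of_adj hx (spoke_mem (Ne.symm hvp) hvq) (Sym2.mem_mk_right p v)
        (reach_of_p_mem _ _ (Sym2.mem_mk_left p v))
  · by_cases hpe : p ∈ (e : Sym2 V)
    · exact reach_of_p_mem e hx hpe
    obtain ⟨c, hce, hcq⟩ : ∃ c ∈ (e : Sym2 V), c ≠ q := by
      obtain ⟨e, he⟩ := e
      induction e using Sym2.ind with
      | _ a b =>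
        by_cases haq : a = q
        · exact ⟨b, Sym2.mem_mk_right a b, fun hbq => he (haq.trans hbq.symm)⟩
        · exact ⟨a, Sym2.mem_mk_left a b, haq⟩
    have hpc : p ≠ c := fun h => hpe (h ▸ hce)
    refine reach_of_adj hx (spoke_mem hpc hcq)
      (middleGraph_adj_inr_inr _ ?_ hce (Sym2.mem_mk_right p c))
      (reach_of_p_mem _ _ (Sym2.mem_mk_left p c))
    exact fun h => hpe (h ▸ Sym2.mem_mk_left p c)

end CompleteGraph

section ConsecutivePairs

variable (n : ℕ)

def consecutivePairs (i : Fin ((n + 1) / 2)) : Fin n ⊕ (⊤ : SimpleGraph (Fin n)).edgeSet :=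
  if h : 2 * i + 1 < n then
    Sum.inr ⟨s(⟨2 * i, by omega⟩, ⟨2 * i + 1, h⟩), by simp [Fin.ext_iff]⟩
  else
    Sum.inl ⟨2 * i, by have := i.isLt; omega⟩

lemma consecutivePairs_injective : Function.Injective (consecutivePairs n) := by
  intro i j hij
  unfold consecutivePairs at hij
  ext
  split_ifs at hij <;> simp [Fin.ext_iff] at hij <;> omega

variable {n}

lemma mem_of_consecutivePairs_eq_inr {i : Fin ((n + 1) / 2)}
    {e : (⊤ : SimpleGraph (Fin n)).edgeSet} (h : consecutivePairs n i = Sum.inr e) (v : Fin n) :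
    v ∈ (e : Sym2 (Fin n)) ↔ (v : ℕ) = 2 * i ∨ (v : ℕ) = 2 * i + 1 := by
  unfold consecutivePairs at h
  split_ifs at h
  cases h
  simp [Fin.ext_iff]

lemma exists_consecutivePairs_dominates (v : Fin n) :
    ∃ i, consecutivePairs n i = Sum.inl v ∨
      (middleGraph ⊤).Adj (consecutivePairs n i) (Sum.inl v) := by
  refine ⟨⟨v / 2, by omega⟩, ?_⟩
  unfold consecutivePairs
  split_ifs with h
  · right
    simp only [middleGraph_adj_inr_inl, Sym2.mem_iff, Fin.ext_iff]
    omega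
  · left
    simp only [Sum.inl.injEq, Fin.ext_iff] at h ⊢
    omega

lemma connected_induce_compl_range_consecutivePairs (h3 : 3 ≤ n) :
    ((middleGraph ⊤).induce (Set.range (consecutivePairs n))ᶜ).Connected :=
  connected_induce_compl_middleGraph_top (p := ⟨0, by omega⟩) (q := ⟨1, by omega⟩)
    (r := ⟨2, by omega⟩) (by simp) (by simp) (by simp)
    (fun _ ⟨_, hi⟩ => by simp only [mem_of_consecutivePairs_eq_inr hi]; omega)
    (fun _ ⟨_, hi⟩ => by simp only [mem_of_consecutivePairs_eq_inr hi]; omega)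

end ConsecutivePairs

theorem stmt6 (n : ℕ) (h3 : 3 ≤ n) :
    outConnDomNum (middleGraph (⊤ : SimpleGraph (Fin n))) = (n + 1) / 2 := by
  set S := Set.range (consecutivePairs n)
  have hdom : IsDomSet (middleGraph ⊤) S := isDomSet_middleGraph_of_forall_inl _ fun v =>
    let ⟨i, hi⟩ := exists_consecutivePairs_dominates v
    ⟨_, ⟨i, rfl⟩, hi⟩
  have hcard : S.ncard = (n + 1) / 2 := by
    rw [Set.ncard_range_of_injective (consecutivePairs_injective n), Nat.card_fin]
  have hconn := connected_induce_compl_range_consecutivePairs h3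
  refine le_antisymm (Nat.sInf_le ⟨S, hdom, hconn, hcard⟩) (le_csInf ⟨_, S, hdom, hconn, hcard⟩ ?_)
  rintro k ⟨T, hT, -, rfl⟩
  have hn := card_le_two_mul_ncard_of_isDomSet _ hT
  rw [Fintype.card_fin] at hn
  omega
end

section
/- For any connected graph G of order n ≥ 2 and any integer p ≥ n, the outer-connected domination number of the middle graph of the join G + K̄_p equals p. -/
open SimpleGraph

/-!
Each of the `p` independent vertices `j` of `K̄_p` is dominated in `M(G + K̄_p)` only by itself
or by an edge at `j`, and no edge contains two of them, so a dominating set has at least `p`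
elements. Conversely, pick a surjection `f : Fin p → V` (possible as `p ≥ n`); the `p` edges
`f j — j` cover every vertex of `G + K̄_p`, hence dominate the middle graph, and deleting them
leaves `G + K̄_p` connected because `G` is connected and each `j` keeps an edge to a vertex
other than `f j`, as `n ≥ 2`. Removing a set of edge-vertices from a middle graph
leaves it connected as soon as removing those edges leaves the graph connected.
-/

section OutConnDomNum

variable {W : Type*} {H : SimpleGraph W}

theorem outConnDomNum_le {S : Set W} (hS : IsDomSet H S) (hc : (H.induce Sᶜ).Connected) :
    outConnDomNum H ≤ S.ncard :=
  Nat.sInf_le ⟨S, hS, hc, rfl⟩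

theorem le_outConnDomNum {k : ℕ} (hne : ∃ S, IsDomSet H S ∧ (H.induce Sᶜ).Connected)
    (hk : ∀ S, IsDomSet H S → k ≤ S.ncard) : k ≤ outConnDomNum H := by
  obtain ⟨S, hS, hc⟩ := hne
  exact le_csInf ⟨_, S, hS, hc, rfl⟩ fun _ ⟨T, hT, _, hTk⟩ => hTk ▸ hk T hT

theorem IsDomSet.card_le_ncard_of_disjoint_closedNbhd [Finite W] {S : Set W}
    (hS : IsDomSet H S) {ι : Type*} (x : ι → W)
    (hx : ∀ i j u, (u = x i ∨ H.Adj u (x i)) → (u = x j ∨ H.Adj u (x j)) → i = j) :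
    Nat.card ι ≤ S.ncard := by
  choose u hu hux using fun i => hS (x i)
  rw [← Nat.card_coe_set_eq]
  exact Nat.card_le_card_of_injective (fun i => ⟨u i, hu i⟩) fun i j hij =>
    hx i j (u i) (hux i) (by rw [show u i = u j from Subtype.ext_iff.mp hij]; exact hux j)

end OutConnDomNum

section MiddleGraph

variable {W : Type*} {H : SimpleGraph W}

theorem middleGraph_eq_of_dominate_inl_of_not_adj {a b : W} (hab : ¬H.Adj a b)
    {u : W ⊕ H.edgeSet} (ha : u = Sum.inl a ∨ (middleGraph H).Adj u (Sum.inl a))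
    (hb : u = Sum.inl b ∨ (middleGraph H).Adj u (Sum.inl b)) : a = b := by
  rcases u with c | e
  · simp only [middleGraph, Sum.inl.injEq, or_false] at ha hb
    exact ha.symm.trans hb
  · simp only [middleGraph, reduceCtorEq, false_or] at ha hb
    by_contra hne
    exact hab (H.mem_edgeSet.mp ((Sym2.mem_and_mem_iff hne).mp ⟨ha, hb⟩ ▸ e.2))

theorem isDomSet_middleGraph_of_forall_mem {C : Set H.edgeSet}
    (hC : ∀ v, ∃ e ∈ C, v ∈ (e : Sym2 W)) : IsDomSet (middleGraph H) (Sum.inr '' C) := by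
  rintro (v | e)
  · obtain ⟨e, he, hv⟩ := hC v
    exact ⟨Sum.inr e, ⟨e, he, rfl⟩, Or.inr hv⟩
  · obtain ⟨⟨v, w⟩, he⟩ := Quot.exists_rep (e : Sym2 W)
    obtain ⟨f, hf, hvf⟩ := hC v
    refine ⟨Sum.inr f, ⟨f, hf, rfl⟩, ?_⟩
    by_cases hfe : f = e
    · exact Or.inl (congrArg Sum.inr hfe)
    · exact Or.inr ⟨hfe, v, hvf, he ▸ Sym2.mem_mk_left v w⟩

theorem connected_induce_compl_middleGraph {C : Set H.edgeSet}
    (hC : (H.deleteEdges (Subtype.val '' C)).Connected) :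
    ((middleGraph H).induce (Sum.inr '' C)ᶜ).Connected := by
  set S : Set (W ⊕ H.edgeSet) := (Sum.inr '' C)ᶜ
  have hinl (v : W) : Sum.inl v ∈ S := by simp [S]
  let ι (v : W) : S := ⟨Sum.inl v, hinl v⟩
  have step {a b : W} (h : (H.deleteEdges (Subtype.val '' C)).Adj a b) :
      ((middleGraph H).induce S).Reachable (ι a) (ι b) := by
    rw [deleteEdges_adj] at h
    let e : H.edgeSet := ⟨s(a, b), h.1⟩
    have he : Sum.inr e ∈ S := by
      rintro ⟨f, hf, hfe⟩
      exact h.2 ⟨f, hf, congrArg Subtype.val (Sum.inr_injective hfe)⟩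
    have hae : ((middleGraph H).induce S).Adj (ι a) ⟨Sum.inr e, he⟩ :=
      Sym2.mem_mk_left a b
    have heb : ((middleGraph H).induce S).Adj ⟨Sum.inr e, he⟩ (ι b) :=
      Sym2.mem_mk_right a b
    exact hae.reachable.trans heb.reachable
  have reach (a b : W) : ((middleGraph H).induce S).Reachable (ι a) (ι b) := by
    rw [reachable_iff_reflTransGen]
    exact Relation.ReflTransGen.lift' ι (fun _ _ h => (reachable_iff_reflTransGen _ _).mp (step h))
      _ _ ((reachable_iff_reflTransGen a b).mp (hC.preconnected a b))
  obtain ⟨w₀⟩ := hC.nonempty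
  rw [connected_iff_exists_forall_reachable]
  refine ⟨ι w₀, ?_⟩
  rintro ⟨v | e, he⟩
  · exact reach w₀ v
  · obtain ⟨⟨v, w⟩, hvw⟩ := Quot.exists_rep (e : Sym2 W)
    have hev : ((middleGraph H).induce S).Adj ⟨Sum.inr e, he⟩ (ι v) :=
      show v ∈ (e : Sym2 W) from hvw ▸ Sym2.mem_mk_left v w
    exact (reach w₀ v).trans hev.reachable.symm

end MiddleGraph

section JoinEmpty

variable {V : Type*} (G : SimpleGraph V) {p : ℕ}

def crossEdge (f : Fin p → V) (j : Fin p) : (joinEmpty G p).edgeSet :=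
  ⟨s(Sum.inl (f j), Sum.inr j), trivial⟩

variable {G}

theorem crossEdge_injective (f : Fin p → V) : Function.Injective (crossEdge G f) := by
  intro i j hij
  have := congrArg Subtype.val hij
  simp [crossEdge] at this
  exact this.2

theorem exists_crossEdge_mem {f : Fin p → V} (hf : Function.Surjective f) (x : V ⊕ Fin p) :
    ∃ e ∈ Set.range (crossEdge G f), x ∈ (e : Sym2 (V ⊕ Fin p)) := by
  rcases x with v | j
  · obtain ⟨j, rfl⟩ := hf v
    exact ⟨_, ⟨j, rfl⟩, Sym2.mem_mk_left _ _⟩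
  · exact ⟨_, ⟨j, rfl⟩, Sym2.mem_mk_right _ _⟩

theorem connected_deleteEdges_crossEdge [Nontrivial V] (hG : G.Connected) (f : Fin p → V) :
    ((joinEmpty G p).deleteEdges (Subtype.val '' Set.range (crossEdge G f))).Connected := by
  set H := (joinEmpty G p).deleteEdges (Subtype.val '' Set.range (crossEdge G f))
  let φ : G →g H := ⟨Sum.inl, fun h => (deleteEdges_adj ..).mpr
    ⟨h, by rintro ⟨_, ⟨j, rfl⟩, h⟩; simp [crossEdge] at h⟩⟩
  obtain ⟨v₀⟩ := hG.nonempty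
  rw [connected_iff_exists_forall_reachable]
  refine ⟨Sum.inl v₀, ?_⟩
  rintro (v | j)
  · exact (hG.preconnected v₀ v).map φ
  · obtain ⟨v, hv⟩ := exists_ne (f j)
    have hadj : H.Adj (Sum.inl v) (Sum.inr j) := by
      refine (deleteEdges_adj ..).mpr ⟨trivial, ?_⟩
      rintro ⟨_, ⟨i, rfl⟩, h⟩
      simp [crossEdge] at h
      obtain ⟨rfl, rfl⟩ := h
      exact hv rfl
    exact ((hG.preconnected v₀ v).map φ).trans hadj.reachable

end JoinEmpty

theorem stmt13 {V : Type*} [Fintype V] (G : SimpleGraph V) (n p : ℕ)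
    (hn : Fintype.card V = n) (h2 : 2 ≤ n) (hc : G.Connected) (hp : n ≤ p) :
    outConnDomNum (middleGraph (joinEmpty G p)) = p := by
  have : Nontrivial V := Fintype.one_lt_card_iff_nontrivial.mp (by omega)
  obtain ⟨ι⟩ := Function.Embedding.nonempty_of_card_le (α := V) (β := Fin p)
    (by rw [hn, Fintype.card_fin]; exact hp)
  set f : Fin p → V := Function.invFun ι
  have hdom := isDomSet_middleGraph_of_forall_mem
    (exists_crossEdge_mem (G := G) (Function.invFun_surjective ι.injective))
  have hconn := connected_induce_compl_middleGraph (connected_deleteEdges_crossEdge hc f)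
  refine le_antisymm ((outConnDomNum_le hdom hconn).trans_eq ?_)
    (le_outConnDomNum ⟨_, hdom, hconn⟩ fun S hS => ?_)
  · rw [← Set.range_comp, Set.ncard_range_of_injective
      (Sum.inr_injective.comp (crossEdge_injective f)), Nat.card_fin]
  · simpa using hS.card_le_ncard_of_disjoint_closedNbhd (fun j : Fin p => Sum.inl (Sum.inr j))
      fun i j u hi hj => Sum.inr_injective
        (middleGraph_eq_of_dominate_inl_of_not_adj (by simp [joinEmpty]) hi hj)
end
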